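/- arXiv:1212.3776 — 2 statements merged into one kernel-verified Lean document; each statement's English description precedes it below -/
import Mathlib

section
/- Let E be a compact closed preordered space, let A ⊆ E be a closed decreasing set, B ⊆ E a closed increasing set, and O ⊆ E an open set such that A ∩ B ⊆ O. Then there exist an open decreasing set U ⊇ A and an open increasing set V ⊇ B such that D(U) ∩ I(V) ⊆ O, where D(U) is the smallest closed decreasing set containing U and I(V) is the smallest closed increasing set containing V. -/
/-- The increasing hull `i(S) = {y | ∃ x ∈ S, x ≤ y}`. -/
def incHull {E : Type*} [Preorder E] (S : Set E) : Set E := {y | ∃ x ∈ S, x ≤ y}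

/-- The decreasing hull `d(S) = {y | ∃ x ∈ S, y ≤ x}`. -/
def decHull {E : Type*} [Preorder E] (S : Set E) : Set E := {y | ∃ x ∈ S, y ≤ x}

/-- `I(S)`: the smallest closed increasing set containing `S`. -/
def closedIncHull {E : Type*} [TopologicalSpace E] [Preorder E] (S : Set E) : Set E :=
  ⋂₀ {C : Set E | S ⊆ C ∧ IsClosed C ∧ incHull C = C}

/-- `D(S)`: the smallest closed decreasing set containing `S`. -/
def closedDecHull {E : Type*} [TopologicalSpace E] [Preorder E] (S : Set E) : Set E :=
  ⋂₀ {C : Set E | S ⊆ C ∧ IsClosed C ∧ decHull C = C}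

/-!
The key input is Nachbin's normality of compact closed preordered spaces: a closed decreasing set
and a disjoint closed increasing set have disjoint open decreasing and open increasing
neighbourhoods. Separating `A` from `i(B \ O)` gives `U ⊇ A` together with a closed decreasing
`A₂ ⊇ U` (the complement of the increasing neighbourhood) with `A₂ ∩ B ⊆ O`. Separating `B` from
`d(A₂ \ O)` in the same way gives `V ⊇ B` and a closed increasing `B₂ ⊇ V` with `A₂ ∩ B₂ ⊆ O`.
Then `D(U) ∩ I(V) ⊆ A₂ ∩ B₂ ⊆ O`.
-/

open Set

section Preorder
variable {E : Type*} [Preorder E]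

lemma incHull_eq_self_iff {S : Set E} : incHull S = S ↔ IsUpperSet S :=
  ⟨fun h _ _ hab ha => h ▸ ⟨_, ha, hab⟩, fun h =>
    Subset.antisymm (fun _ ⟨_, hx, hxy⟩ => h hxy hx) fun y hy => ⟨y, hy, le_rfl⟩⟩

lemma decHull_eq_self_iff {S : Set E} : decHull S = S ↔ IsLowerSet S :=
  incHull_eq_self_iff (E := Eᵒᵈ)

variable [TopologicalSpace E]

lemma closedIncHull_subset {S C : Set E} (hSC : S ⊆ C) (hC : IsClosed C) (hC' : IsUpperSet C) :
    closedIncHull S ⊆ C :=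
  sInter_subset_of_mem ⟨hSC, hC, incHull_eq_self_iff.2 hC'⟩

lemma closedDecHull_subset {S C : Set E} (hSC : S ⊆ C) (hC : IsClosed C) (hC' : IsLowerSet C) :
    closedDecHull S ⊆ C :=
  closedIncHull_subset (E := Eᵒᵈ) hSC hC hC'

end Preorder

instance OrderDual.compactSpace {X : Type*} [TopologicalSpace X] [CompactSpace X] :
    CompactSpace Xᵒᵈ :=
  ‹_›

section OrderClosedTopology
variable {E : Type*} [TopologicalSpace E] [Preorder E] [OrderClosedTopology E]

lemma IsCompact.isClosed_upperClosure {K : Set E} (hK : IsCompact K) :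
    IsClosed (upperClosure K : Set E) := by
  refine isOpen_compl_iff.1 (isOpen_iff_forall_mem_open.2 fun y hy => ?_)
  have hKy : K ×ˢ {y} ⊆ {p : E × E | p.1 ≤ p.2}ᶜ := by
    rintro ⟨a, b⟩ ⟨ha, rfl⟩ hab
    exact hy ⟨a, ha, hab⟩
  obtain ⟨u, v, -, hv, hKu, hyv, huv⟩ :=
    generalized_tube_lemma hK isCompact_singleton isClosed_le_prod.isOpen_compl hKy
  exact ⟨v, fun z hz ⟨x, hx, hxz⟩ => huv (mk_mem_prod (hKu hx) hz) hxz, hv, hyv rfl⟩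

variable [CompactSpace E]

lemma IsOpen.exists_isOpen_isLowerSet_subset {F Q : Set E} (hQ : IsOpen Q) (hF : IsLowerSet F)
    (hFQ : F ⊆ Q) : ∃ U, IsOpen U ∧ IsLowerSet U ∧ F ⊆ U ∧ U ⊆ Q :=
  ⟨(upperClosure Qᶜ : Set E)ᶜ, hQ.isClosed_compl.isCompact.isClosed_upperClosure.isOpen_compl,
    (upperClosure Qᶜ).upper.compl, fun _ hf ⟨_, hz, hzf⟩ => hz (hFQ (hF hzf hf)),
    compl_subset_comm.1 subset_upperClosure⟩

lemma IsOpen.exists_isOpen_isUpperSet_subset {G P : Set E} (hP : IsOpen P) (hG : IsUpperSet G)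
    (hGP : G ⊆ P) : ∃ V, IsOpen V ∧ IsUpperSet V ∧ G ⊆ V ∧ V ⊆ P :=
  IsOpen.exists_isOpen_isLowerSet_subset (E := Eᵒᵈ) hP hG hGP

theorem exists_disjoint_isOpen_isLowerSet_isUpperSet {F G : Set E} (hF : IsClosed F)
    (hF' : IsLowerSet F) (hG : IsClosed G) (hG' : IsUpperSet G) (hFG : Disjoint F G) :
    ∃ U V, IsOpen U ∧ IsLowerSet U ∧ F ⊆ U ∧ IsOpen V ∧ IsUpperSet V ∧ G ⊆ V ∧ Disjoint U V := by
  -- No point of `G` lies below a point of `F`, so `G ×ˢ F` misses the closed graph of `≤`.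
  have hGF : G ×ˢ F ⊆ {p : E × E | p.1 ≤ p.2}ᶜ := by
    rintro ⟨g, f⟩ ⟨hg, hf⟩ hgf
    exact disjoint_left.1 hFG (hF' hgf hf) hg
  obtain ⟨P, Q, hP, hQ, hGP, hFQ, hPQ⟩ :=
    generalized_tube_lemma hG.isCompact hF.isCompact isClosed_le_prod.isOpen_compl hGF
  obtain ⟨U, hU, hU', hFU, hUQ⟩ := hQ.exists_isOpen_isLowerSet_subset hF' hFQ
  obtain ⟨V, hV, hV', hGV, hVP⟩ := hP.exists_isOpen_isUpperSet_subset hG' hGP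
  exact ⟨U, V, hU, hU', hFU, hV, hV', hGV,
    disjoint_left.2 fun x hxU hxV => hPQ (mk_mem_prod (hVP hxV) (hUQ hxU)) le_rfl⟩

lemma exists_isOpen_isLowerSet_subset_isClosed_isLowerSet_inter_subset {A B O : Set E}
    (hA : IsClosed A) (hA' : IsLowerSet A) (hB : IsClosed B) (hO : IsOpen O)
    (hAB : A ∩ B ⊆ O) :
    ∃ U C, IsOpen U ∧ IsLowerSet U ∧ A ⊆ U ∧ U ⊆ C ∧ IsClosed C ∧ IsLowerSet C ∧ C ∩ B ⊆ O := by
  have hdisj : Disjoint A (upperClosure (B \ O) : Set E) :=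
    disjoint_left.2 fun _ ha ⟨_, ⟨hbB, hbO⟩, hba⟩ => hbO (hAB ⟨hA' hba ha, hbB⟩)
  obtain ⟨U, V, hU, hU', hAU, hV, hV', hBOV, hUV⟩ := exists_disjoint_isOpen_isLowerSet_isUpperSet
    hA hA' (hB.sdiff hO).isCompact.isClosed_upperClosure (upperClosure _).upper hdisj
  refine ⟨U, Vᶜ, hU, hU', hAU, hUV.subset_compl_right, hV.isClosed_compl, hV'.compl,
    fun x ⟨hxV, hxB⟩ => ?_⟩
  by_contra hxO
  exact hxV (hBOV (subset_upperClosure ⟨hxB, hxO⟩))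

end OrderClosedTopology

/-- In a compact closed preordered space, given a closed decreasing set `A`, a
closed increasing set `B` and an open set `O` with `A ∩ B ⊆ O`, there are an
open decreasing `U ⊇ A` and an open increasing `V ⊇ B` with `D(U) ∩ I(V) ⊆ O`. -/
theorem compact_closedPreordered_convex_separation {E : Type*} [TopologicalSpace E]
    [Preorder E] [CompactSpace E]
    (hG : IsClosed {p : E × E | p.1 ≤ p.2})
    (A B O : Set E)
    (hA : IsClosed A) (hAd : decHull A = A)
    (hB : IsClosed B) (hBi : incHull B = B)
    (hO : IsOpen O) (hAB : A ∩ B ⊆ O) :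
    ∃ U V : Set E, IsOpen U ∧ decHull U = U ∧ A ⊆ U ∧
      IsOpen V ∧ incHull V = V ∧ B ⊆ V ∧
      closedDecHull U ∩ closedIncHull V ⊆ O := by
  have : OrderClosedTopology E := ⟨hG⟩
  rw [decHull_eq_self_iff] at hAd
  rw [incHull_eq_self_iff] at hBi
  obtain ⟨U, A₂, hU, hU', hAU, hUA₂, hA₂, hA₂', hA₂B⟩ :=
    exists_isOpen_isLowerSet_subset_isClosed_isLowerSet_inter_subset hA hAd hB hO hAB
  obtain ⟨V, B₂, hV, hV', hBV, hVB₂, hB₂, hB₂', hB₂A₂⟩ :=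
    exists_isOpen_isLowerSet_subset_isClosed_isLowerSet_inter_subset (E := Eᵒᵈ)
      hB hBi hA₂ hO (inter_comm A₂ B ▸ hA₂B)
  refine ⟨U, V, hU, decHull_eq_self_iff.2 hU', hAU, hV, incHull_eq_self_iff.2 hV', hBV, ?_⟩
  calc closedDecHull U ∩ closedIncHull V ⊆ A₂ ∩ B₂ :=
        inter_subset_inter (closedDecHull_subset hUA₂ hA₂ hA₂') (closedIncHull_subset hVB₂ hB₂ hB₂')
    _ ⊆ O := inter_comm B₂ A₂ ▸ hB₂A₂
end

section
/- Let E be a closed preordered k_ω-space, let x ∈ E, and let O be an open convex neighborhood of x. Then there exist an open decreasing set U and an open increasing set V such that x ∈ U ∩ V ⊆ O. -/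
open Topology

/-- A subset `C` is (order) convex if `C = d(C) ∩ i(C)`. -/
def IsOrdConvex {E : Type*} [Preorder E] (C : Set E) : Prop :=
  decHull C ∩ incHull C = C

/-- A `k_ω`-space: there is an increasing sequence of compact sets covering the
space such that a set is open iff its trace on each compact set is open in the
subspace topology. -/
def IsKOmegaSpace (E : Type*) [TopologicalSpace E] : Prop :=
  ∃ K : ℕ → Set E, (∀ n, IsCompact (K n)) ∧ (∀ n, K n ⊆ K (n + 1)) ∧
    (⋃ n, K n) = Set.univ ∧
    ∀ O : Set E, IsOpen O ↔ ∀ n, IsOpen {y : K n | (y : E) ∈ O}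

/-!
Exhaust `E` by compact sets `K₀ ⊆ K₁ ⊆ ⋯` with `x ∈ K₀` and grow compact sets `Cₙ, Dₙ`
from `C₀ = D₀ = {x}` so that `Cₙ₊₁ ⊆ Kₙ` is a neighbourhood of `i(Cₙ) ∩ Kₙ` within `Kₙ`,
`Dₙ₊₁ ⊆ Kₙ` one of `d(Dₙ) ∩ Kₙ`, and `i(Cₙ) ∩ d(Dₙ) ⊆ O` throughout. A step is possible
because a closed preorder makes `i(C) ∩ K` compact for compact `C, K`, so the tube lemma in
`E × E` can thicken `i(Cₙ) ∩ Kₙ` and `d(Dₙ) ∩ Kₙ` without creating pairs `a ≤ b` that leave `O`.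
Then `V = ⋃ Cₙ` and `U = ⋃ Dₙ` are open because their traces on every `Kₘ` are relatively open,
and they absorb their hulls because every point lies in some `Kₘ`.
-/

open Set Filter

section Order

variable {E : Type*} [Preorder E]

lemma subset_incHull (S : Set E) : S ⊆ incHull S := fun y hy => ⟨y, hy, le_rfl⟩

lemma incHull_mono {S T : Set E} (h : S ⊆ T) : incHull S ⊆ incHull T :=
  fun _ ⟨z, hz, hzy⟩ => ⟨z, h hz, hzy⟩

/-- For convex `O`, `C ×ˢ D ⊆ admissiblePairs O` is equivalent to `i(C) ∩ d(D) ⊆ O`, but unlike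
the latter it is an open condition on `C ×ˢ D`. -/
def admissiblePairs (O : Set E) : Set (E × E) := {p | p.1 ≤ p.2 → p.1 ∈ O ∧ p.2 ∈ O}

lemma IsOrdConvex.incHull_inter_decHull_subset {O C D : Set E} (hO : IsOrdConvex O)
    (hCD : C ×ˢ D ⊆ admissiblePairs O) : incHull C ∩ decHull D ⊆ O := by
  rintro z ⟨⟨c, hc, hcz⟩, ⟨d, hd, hzd⟩⟩
  obtain ⟨hcO, hdO⟩ := hCD (mk_mem_prod hc hd) (hcz.trans hzd)
  rw [← hO]
  exact ⟨⟨d, hdO, hzd⟩, ⟨c, hcO, hcz⟩⟩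

lemma incHull_prod_decHull_subset_admissiblePairs {O C D : Set E}
    (h : incHull C ∩ decHull D ⊆ O) : incHull C ×ˢ decHull D ⊆ admissiblePairs O := by
  rintro ⟨a, b⟩ ⟨⟨c, hc, hca⟩, ⟨d, hd, hbd⟩⟩ hab
  exact ⟨h ⟨⟨c, hc, hca⟩, ⟨d, hd, hab.trans hbd⟩⟩, h ⟨⟨c, hc, hca.trans hab⟩, ⟨d, hd, hbd⟩⟩⟩

lemma iUnion_inter_iUnion_subset {O : Set E} {C D : ℕ → Set E} (hC : Monotone C)
    (hD : Monotone D) (hCD : ∀ n, C n ×ˢ D n ⊆ admissiblePairs O) :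
    (⋃ n, D n) ∩ (⋃ n, C n) ⊆ O := by
  rintro z ⟨hzD, hzC⟩
  obtain ⟨j, hj⟩ := mem_iUnion.mp hzD
  obtain ⟨m, hm⟩ := mem_iUnion.mp hzC
  exact (hCD (max j m) (mk_mem_prod (hC (le_max_right j m) hm) (hD (le_max_left j m) hj))
    le_rfl).1

end Order

section ClosedOrder

variable {E : Type*} [TopologicalSpace E] [Preorder E] [OrderClosedTopology E]

lemma isOpen_admissiblePairs {O : Set E} (hO : IsOpen O) : IsOpen (admissiblePairs O) := by
  have : admissiblePairs O = {p : E × E | p.1 ≤ p.2}ᶜ ∪ O ×ˢ O := by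
    ext p
    exact imp_iff_not_or
  rw [this]
  exact isClosed_le_prod.isOpen_compl.union (hO.prod hO)

lemma IsCompact.incHull_inter {C A : Set E} (hC : IsCompact C) (hA : IsCompact A) :
    IsCompact (incHull C ∩ A) := by
  have : incHull C ∩ A = Prod.snd '' (C ×ˢ A ∩ {p : E × E | p.1 ≤ p.2}) := by
    ext y
    constructor
    · rintro ⟨⟨z, hz, hzy⟩, hyA⟩
      exact ⟨(z, y), ⟨⟨hz, hyA⟩, hzy⟩, rfl⟩
    · rintro ⟨⟨z, y⟩, ⟨⟨hz, hyA⟩, hzy⟩, rfl⟩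
      exact ⟨⟨z, hz, hzy⟩, hyA⟩
  rw [this]
  exact ((hC.prod hA).inter_right isClosed_le_prod).image continuous_snd

/-- The tube lemma applied to `(i(C) ∩ A) ×ˢ (A \ W)`, which misses the closed graph of `≤`,
gives disjoint open neighbourhoods of `i(C) ∩ A` and `A \ W`. -/
lemma exists_isCompact_mem_nhdsSetWithin_incHull_inter {C A W : Set E} (hC : IsCompact C)
    (hA : IsCompact A) (hW : IsOpen W) (hCW : incHull C ∩ A ⊆ W) :
    ∃ C' : Set E, IsCompact C' ∧ C' ⊆ W ∧ C' ⊆ A ∧ C' ∈ 𝓝ˢ[A] (incHull C ∩ A) := by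
  have hnot_le : (incHull C ∩ A) ×ˢ (A \ W) ⊆ {p : E × E | p.1 ≤ p.2}ᶜ := by
    rintro ⟨p, q⟩ ⟨⟨⟨z, hz, hzp⟩, -⟩, hqA, hqW⟩ hpq
    exact hqW (hCW ⟨⟨z, hz, hzp.trans hpq⟩, hqA⟩)
  obtain ⟨u, v, hu, hv, hSu, hDv, huv⟩ := generalized_tube_lemma (hC.incHull_inter hA)
    (hA.diff hW) isClosed_le_prod.isOpen_compl hnot_le
  have hdisj : Disjoint u v :=
    disjoint_left.mpr fun z hzu hzv => huv (mk_mem_prod hzu hzv) le_rfl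
  refine ⟨closure u ∩ A, hA.inter_left isClosed_closure, ?_, inter_subset_right,
    mem_nhdsSetWithin.mpr ⟨u, hu, hSu, inter_subset_inter_left A subset_closure⟩⟩
  rintro z ⟨hzu, hzA⟩
  by_contra hzW
  exact (hdisj.closure_left hv).le_bot ⟨hzu, hDv ⟨hzA, hzW⟩⟩

lemma exists_admissible_mem_nhdsSetWithin_hulls {O A C D : Set E} (hO : IsOpen O)
    (hconv : IsOrdConvex O) (hA : IsCompact A) (hC : IsCompact C) (hD : IsCompact D)
    (hCD : C ×ˢ D ⊆ admissiblePairs O) :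
    ∃ C' D' : Set E, (IsCompact C' ∧ IsCompact D' ∧ C' ×ˢ D' ⊆ admissiblePairs O) ∧
      (C' ⊆ A ∧ C' ∈ 𝓝ˢ[A] (incHull C ∩ A)) ∧ (D' ⊆ A ∧ D' ∈ 𝓝ˢ[A] (decHull D ∩ A)) := by
  have hpairs : (incHull C ∩ A) ×ˢ (decHull D ∩ A) ⊆ admissiblePairs O :=
    (prod_mono inter_subset_left inter_subset_left).trans
      (incHull_prod_decHull_subset_admissiblePairs (hconv.incHull_inter_decHull_subset hCD))
  obtain ⟨W, W', hW, hW', hCW, hDW', hWW'⟩ := generalized_tube_lemma (hC.incHull_inter hA)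
    (hD.incHull_inter (E := Eᵒᵈ) hA) (isOpen_admissiblePairs hO) hpairs
  obtain ⟨C', hC'c, hC'W, hC'A, hC'⟩ :=
    exists_isCompact_mem_nhdsSetWithin_incHull_inter hC hA hW hCW
  obtain ⟨D', hD'c, hD'W', hD'A, hD'⟩ :=
    exists_isCompact_mem_nhdsSetWithin_incHull_inter (E := Eᵒᵈ) hD hA hW' hDW'
  exact ⟨C', D', ⟨hC'c, hD'c, (prod_mono hC'W hD'W').trans hWW'⟩, ⟨hC'A, hC'⟩, ⟨hD'A, hD'⟩⟩

end ClosedOrder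

lemma mem_nhdsWithin_of_mem_nhdsSetWithin {E : Type*} [TopologicalSpace E] {s t u : Set E}
    {x : E} (h : u ∈ 𝓝ˢ[t] s) (hx : x ∈ s) : u ∈ 𝓝[t] x := by
  simpa using nhdsSetWithin_mono_left (singleton_subset_iff.mpr hx) h

lemma exists_seq_of_forall_exists {α : Type*} {P : α → Prop} {R : ℕ → α → α → Prop} {a : α}
    (ha : P a) (h : ∀ n a, P a → ∃ b, P b ∧ R n a b) :
    ∃ f : ℕ → α, f 0 = a ∧ ∀ n, P (f n) ∧ R n (f n) (f (n + 1)) := by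
  choose! g hgP hgR using h
  let f : ℕ → α := fun n => Nat.rec a (fun k b => g k b) n
  have hf : ∀ n, P (f n) := fun n => Nat.rec ha (fun k ih => hgP k (f k) ih) n
  exact ⟨f, rfl, fun n => ⟨hf n, hgR n (f n) (hf n)⟩⟩

lemma IsKOmegaSpace.exists_exhaustion {E : Type*} [TopologicalSpace E] (hE : IsKOmegaSpace E)
    (x : E) : ∃ K : ℕ → Set E, (∀ n, IsCompact (K n)) ∧ Monotone K ∧ x ∈ K 0 ∧
      (∀ y, ∃ n, y ∈ K n) ∧ ∀ U : Set E, (∀ n, ∀ y ∈ U ∩ K n, U ∈ 𝓝[K n] y) → IsOpen U := by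
  obtain ⟨K, hKc, hKmono, hKcover, hKopen⟩ := hE
  refine ⟨fun n => insert x (K n), fun n => (hKc n).insert x,
    monotone_nat_of_le_succ fun n => insert_subset_insert (hKmono n), mem_insert x _,
    fun y => ?_, fun U hU => (hKopen U).mpr fun n => ?_⟩
  · obtain ⟨n, hn⟩ := mem_iUnion.mp (hKcover ▸ mem_univ y)
    exact ⟨n, mem_insert_of_mem x hn⟩
  · refine isOpen_iff_mem_nhds.mpr fun y hy => preimage_coe_mem_nhds_subtype.mpr ?_
    exact nhdsWithin_mono _ (subset_insert x (K n)) (hU n y ⟨hy, mem_insert_of_mem x y.2⟩)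

section Exhaustion

variable {E : Type*} [TopologicalSpace E] [Preorder E] {K C : ℕ → Set E}

lemma monotone_of_mem_nhdsSetWithin_incHull (hK : Monotone K) (hC0 : C 0 ⊆ K 0)
    (hC : ∀ n, C (n + 1) ⊆ K n ∧ C (n + 1) ∈ 𝓝ˢ[K n] (incHull (C n) ∩ K n)) : Monotone C := by
  have hCK : ∀ n, C n ⊆ K n
    | 0 => hC0
    | n + 1 => (hC n).1.trans (hK n.le_succ)
  refine monotone_nat_of_le_succ fun n y hy => ?_
  have : y ∈ incHull (C n) ∩ K n := ⟨subset_incHull _ hy, hCK n hy⟩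
  exact mem_of_mem_nhdsWithin this.2 (mem_nhdsWithin_of_mem_nhdsSetWithin (hC n).2 this)

lemma iUnion_mem_nhdsWithin_of_mem_incHull (hK : Monotone K) (hC0 : C 0 ⊆ K 0)
    (hC : ∀ n, C (n + 1) ⊆ K n ∧ C (n + 1) ∈ 𝓝ˢ[K n] (incHull (C n) ∩ K n))
    {y : E} {j m : ℕ} (hy : y ∈ incHull (C j) ∩ K m) : ⋃ n, C n ∈ 𝓝[K m] y := by
  set k := max j m
  have hyk : y ∈ incHull (C k) ∩ K k :=
    ⟨incHull_mono (monotone_of_mem_nhdsSetWithin_incHull hK hC0 hC (le_max_left j m)) hy.1,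
      hK (le_max_right j m) hy.2⟩
  exact mem_of_superset (nhdsWithin_mono _ (hK (le_max_right j m))
    (mem_nhdsWithin_of_mem_nhdsSetWithin (hC k).2 hyk)) (subset_iUnion C (k + 1))

lemma isOpen_iUnion_of_mem_nhdsSetWithin_incHull (hK : Monotone K) (hC0 : C 0 ⊆ K 0)
    (hC : ∀ n, C (n + 1) ⊆ K n ∧ C (n + 1) ∈ 𝓝ˢ[K n] (incHull (C n) ∩ K n))
    (hopen : ∀ U : Set E, (∀ n, ∀ y ∈ U ∩ K n, U ∈ 𝓝[K n] y) → IsOpen U) :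
    IsOpen (⋃ n, C n) := by
  refine hopen _ fun m y ⟨hy, hym⟩ => ?_
  obtain ⟨j, hj⟩ := mem_iUnion.mp hy
  exact iUnion_mem_nhdsWithin_of_mem_incHull hK hC0 hC ⟨subset_incHull _ hj, hym⟩

lemma incHull_iUnion_of_mem_nhdsSetWithin_incHull (hK : Monotone K) (hC0 : C 0 ⊆ K 0)
    (hC : ∀ n, C (n + 1) ⊆ K n ∧ C (n + 1) ∈ 𝓝ˢ[K n] (incHull (C n) ∩ K n))
    (hcover : ∀ y, ∃ n, y ∈ K n) : incHull (⋃ n, C n) = ⋃ n, C n := by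
  refine subset_antisymm ?_ (subset_incHull _)
  rintro y ⟨c, hc, hcy⟩
  obtain ⟨j, hj⟩ := mem_iUnion.mp hc
  obtain ⟨m, hm⟩ := hcover y
  exact mem_of_mem_nhdsWithin hm
    (iUnion_mem_nhdsWithin_of_mem_incHull hK hC0 hC ⟨⟨c, hj, hcy⟩, hm⟩)

end Exhaustion

/-- In a closed preordered `k_ω`-space, every open convex neighborhood `O` of a
point `x` contains `U ∩ V ∋ x` with `U` open decreasing and `V` open increasing. -/
theorem convex_at_of_weaklyConvex_at {E : Type*} [TopologicalSpace E] [Preorder E]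
    (hG : IsClosed {p : E × E | p.1 ≤ p.2})
    (hkw : IsKOmegaSpace E)
    (x : E) (O : Set E) (hO : IsOpen O) (hxO : x ∈ O) (hOconv : IsOrdConvex O) :
    ∃ U V : Set E, IsOpen U ∧ decHull U = U ∧ IsOpen V ∧ incHull V = V ∧
      x ∈ U ∩ V ∧ U ∩ V ⊆ O := by
  have : OrderClosedTopology E := ⟨hG⟩
  obtain ⟨K, hKc, hK, hxK, hcover, hopen⟩ := hkw.exists_exhaustion x
  obtain ⟨s, hs0, hs⟩ := exists_seq_of_forall_exists
    (P := fun s : Set E × Set E => IsCompact s.1 ∧ IsCompact s.2 ∧ s.1 ×ˢ s.2 ⊆ admissiblePairs O)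
    (R := fun n s t => (t.1 ⊆ K n ∧ t.1 ∈ 𝓝ˢ[K n] (incHull s.1 ∩ K n)) ∧
      (t.2 ⊆ K n ∧ t.2 ∈ 𝓝ˢ[K n] (decHull s.2 ∩ K n)))
    (a := ({x}, {x}))
    ⟨isCompact_singleton, isCompact_singleton, by
      rw [singleton_prod_singleton]; exact singleton_subset_iff.mpr fun _ => ⟨hxO, hxO⟩⟩
    fun n s hs => by
      obtain ⟨C', D', hP, hR⟩ :=
        exists_admissible_mem_nhdsSetWithin_hulls hO hOconv (hKc n) hs.1 hs.2.1 hs.2.2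
      exact ⟨(C', D'), hP, hR⟩
  have hV0 : (s 0).1 ⊆ K 0 := by simp [hs0, hxK]
  have hU0 : (s 0).2 ⊆ K 0 := by simp [hs0, hxK]
  have hV := fun n => (hs n).2.1
  have hU := fun n => (hs n).2.2
  refine ⟨⋃ n, (s n).2, ⋃ n, (s n).1,
    isOpen_iUnion_of_mem_nhdsSetWithin_incHull (E := Eᵒᵈ) hK hU0 hU hopen,
    incHull_iUnion_of_mem_nhdsSetWithin_incHull (E := Eᵒᵈ) hK hU0 hU hcover,
    isOpen_iUnion_of_mem_nhdsSetWithin_incHull hK hV0 hV hopen,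
    incHull_iUnion_of_mem_nhdsSetWithin_incHull hK hV0 hV hcover,
    ⟨mem_iUnion_of_mem 0 (by simp [hs0]), mem_iUnion_of_mem 0 (by simp [hs0])⟩,
    iUnion_inter_iUnion_subset (monotone_of_mem_nhdsSetWithin_incHull hK hV0 hV)
      (monotone_of_mem_nhdsSetWithin_incHull (E := Eᵒᵈ) hK hU0 hU) fun n => (hs n).1.2.2⟩
end
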